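/- arXiv:0801.1157 — 2 statements merged into one kernel-verified Lean document; each statement's English description precedes it below -/
import Mathlib

section
/- Let r₁ ∈ ℂ be nonzero, M₁ = [[1 − (8i/π)ln 2, −(32i/π)(ln 2)²],[2i/π, 1 + (8i/π)ln 2]], Mₓ = [[1, 2πi],[0, 1]], M∞⁺ = M₁Mₓ, and C = [[1 − (4i/π)ln 2, −(16i/π)(ln 2)² r₁],[i/π, (1 + (4i/π)ln 2) r₁]]. Then C is invertible and C⁻¹ · M∞⁺ · C = [[−1, 2πi·r₁],[0, −1]]. -/
open Matrix Complex

set_option maxHeartbeats 1000000 in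
theorem jordan_form_of_monodromy_at_infinity (r₁ : ℂ) (hr₁ : r₁ ≠ 0) :
    let π : ℂ := (Real.pi : ℂ)
    let l2 : ℂ := (Real.log 2 : ℂ)
    let M₁ : Matrix (Fin 2) (Fin 2) ℂ :=
      !![1 - (8 * I / π) * l2, -(32 * I / π) * l2 ^ 2; 2 * I / π, 1 + (8 * I / π) * l2]
    let Mₓ : Matrix (Fin 2) (Fin 2) ℂ := !![1, 2 * π * I; 0, 1]
    let Minf : Matrix (Fin 2) (Fin 2) ℂ := M₁ * Mₓ
    let C : Matrix (Fin 2) (Fin 2) ℂ :=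
      !![1 - (4 * I / π) * l2, -(16 * I / π) * l2 ^ 2 * r₁;
         I / π, (1 + (4 * I / π) * l2) * r₁]
    IsUnit C ∧ C⁻¹ * Minf * C = !![-1, 2 * π * I * r₁; 0, -1] := by
  intro π l2 M₁ Mₓ Minf C
  have hπ : π ≠ 0 := by
    simpa [π] using Complex.ofReal_ne_zero.mpr Real.pi_ne_zero
  have hdet : C.det = r₁ := by
    simp only [C, Matrix.det_fin_two_of]
    field_simp
    ring_nf
  have hC : IsUnit C := by
    rw [Matrix.isUnit_iff_isUnit_det, hdet]
    exact hr₁.isUnit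
  refine ⟨hC, ?_⟩
  have key : Minf * C = C * !![-1, 2 * π * I * r₁; 0, -1] := by
    simp only [Minf, M₁, Mₓ, C]
    ext i j
    fin_cases i <;> fin_cases j <;>
      simp [Matrix.mul_apply, Fin.sum_univ_two]
    all_goals try field_simp
    all_goals try ring_nf
    all_goals simp only [show (I:ℂ)^3 = -I from by simp [pow_succ], Complex.I_sq]
    all_goals try ring_nf
  calc C⁻¹ * Minf * C = C⁻¹ * (Minf * C) := by rw [Matrix.mul_assoc]
    _ = C⁻¹ * (C * !![-1, 2 * π * I * r₁; 0, -1]) := by rw [key]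
    _ = !![-1, 2 * π * I * r₁; 0, -1] := by
        rw [← Matrix.mul_assoc, Matrix.nonsing_inv_mul C ((Matrix.isUnit_iff_isUnit_det C).mp hC), Matrix.one_mul]
end

section
/- Let a, c, r ∈ ℂ with a ≠ 0 and a ≠ c. Define B₀ = [[r, r(r+c)/(a(a−c))],[a(c−a), −c−r]] and B₁ = [[−a−r, 1 − r(r+c)/(a(a−c))],[a(a−c), c−a+r]]. Then det(B₀) = 0, tr(B₀) = −c, det(B₁) = 0, tr(B₁) = c − 2a, and B₀ + B₁ = [[−a, 1],[0, −a]]. -/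
open Matrix

theorem residue_matrices_jordan_case (a c r : ℂ) (ha : a ≠ 0) (hac : a ≠ c) :
    let B₀ : Matrix (Fin 2) (Fin 2) ℂ :=
      !![r, r * (r + c) / (a * (a - c)); a * (c - a), -c - r]
    let B₁ : Matrix (Fin 2) (Fin 2) ℂ :=
      !![-a - r, 1 - r * (r + c) / (a * (a - c)); a * (a - c), c - a + r]
    B₀.det = 0 ∧ B₀.trace = -c ∧ B₁.det = 0 ∧ B₁.trace = c - 2 * a ∧
      B₀ + B₁ = !![-a, 1; 0, -a] := by
  have hd : a * (a - c) ≠ 0 := mul_ne_zero ha (sub_ne_zero.mpr hac)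
  refine ⟨?_, ?_, ?_, ?_, ?_⟩
  · simp [det_fin_two]; field_simp; ring
  · simp [trace_fin_two]
  · simp [det_fin_two]; field_simp; ring
  · simp [trace_fin_two]; ring
  · ext i j
    fin_cases i <;> fin_cases j <;> simp <;> ring
end
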